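/- arXiv:2502.04652 — 2 statements merged into one kernel-verified Lean document; each statement's English description precedes it below -/
import Mathlib

section
/- Let Â = A + εB be a dual real n×n matrix with index of A equal to m and S = Σ_{i=1}^m A^{m-i} B A^{i-1}. Suppose the dual core-EP inverse of Â exists. Then rank([A^m S]) = rank(A^m) (block matrix obtained by horizontal concatenation) if and only if Â^⊕ = A^⊕ − ε A^⊕ B A^⊕. -/
open Matrix

abbrev Mat (n : ℕ) := Matrix (Fin n) (Fin n) ℝ

/-- A dual matrix `A + ε B` represented as the pair `(A, B)`. -/
abbrev DM (n : ℕ) := Mat n × Mat n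

/-- Dual matrix multiplication: `(A+εB)(C+εD) = AC + ε(AD+BC)`. -/
def dmul {n : ℕ} (X Y : DM n) : DM n := (X.1 * Y.1, X.1 * Y.2 + X.2 * Y.1)

/-- Componentwise transpose of a dual matrix. -/
def dT {n : ℕ} (X : DM n) : DM n := (X.1ᵀ, X.2ᵀ)

/-- Powers of a dual matrix. -/
def dpow {n : ℕ} (X : DM n) : ℕ → DM n
  | 0 => (1, 0)
  | k+1 => dmul X (dpow X k)

/-- `m` is the index of `A`: the least `m` with `rank (A^(m+1)) = rank (A^m)`. -/
def MatIndex {n : ℕ} (A : Mat n) (m : ℕ) : Prop :=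
  (A ^ (m+1)).rank = (A ^ m).rank ∧ ∀ k < m, (A ^ (k+1)).rank ≠ (A ^ k).rank

/-- `X` is the core-EP inverse of `A` (with `m` the index of `A`). -/
def IsCEP {n : ℕ} (m : ℕ) (A X : Mat n) : Prop :=
  (A * X)ᵀ = A * X ∧ A * (X * X) = X ∧ X * A ^ (m+1) = A ^ m

/-- `Xh` is a dual core-EP inverse of the dual matrix `Ah`. -/
def IsDualCEP {n : ℕ} (m : ℕ) (Ah Xh : DM n) : Prop :=
  dT (dmul Ah Xh) = dmul Ah Xh ∧ dmul Ah (dmul Xh Xh) = Xh ∧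
    dmul Xh (dpow Ah (m+1)) = dpow Ah m

/-! The real part of the dual core-EP inverse `Ac + ε Y` is `A^⊕` by uniqueness, and the ε-parts
of the defining equations are linear conditions on `Y`. The rank condition says `S = A^m Z`,
i.e. `A^⊕ A S = S`; by the ε-part of `X̂ Â^{m+1} = Â^m` this is equivalent to `D A^{m+1} = 0`
for `D = Y + A^⊕ B A^⊕`. The two other ε-equations then show that `D` lies in the range of the
orthogonal projector `P = A A^⊕` while `A D` is orthogonal to that range, so `A D = 0` and
`D = A^⊕ A D = 0`. Only the algebra of a ring with involution is involved. -/

def IsCoreEPInverse {R : Type*} [Monoid R] [Star R] (m : ℕ) (a x : R) : Prop :=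
  IsSelfAdjoint (a * x) ∧ a * (x * x) = x ∧ x * a ^ (m + 1) = a ^ m

namespace IsCoreEPInverse

section Monoid

variable {R : Type*} [Monoid R] [StarMul R] {m : ℕ} {a x : R}

lemma pow_mul_pow_succ (h : IsCoreEPInverse m a x) (k : ℕ) : a ^ k * x ^ (k + 1) = x := by
  induction k with
  | zero => simp
  | succ k ih =>
    calc a ^ (k + 1) * x ^ (k + 2) = a ^ k * (a * (x * x) * x ^ k) := by
          rw [pow_succ a k, pow_succ' x (k + 1), pow_succ' x k]; simp only [mul_assoc]
      _ = x := by rw [h.2.1, ← pow_succ', ih]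

lemma mul_eq_pow_mul_pow (h : IsCoreEPInverse m a x) : a * x = a ^ (m + 1) * x ^ (m + 1) := by
  conv_lhs => rw [← h.pow_mul_pow_succ m]
  rw [← mul_assoc, ← pow_succ']

lemma mul_mul_self (h : IsCoreEPInverse m a x) : x * (a * x) = x := by
  rw [h.mul_eq_pow_mul_pow, ← mul_assoc, h.2.2, h.pow_mul_pow_succ]

lemma mul_mul_pow_succ (h : IsCoreEPInverse m a x) : a * x * a ^ (m + 1) = a ^ (m + 1) := by
  rw [mul_assoc, h.2.2, ← pow_succ']

lemma mul_pow_add_two (h : IsCoreEPInverse m a x) : x * a ^ (m + 2) = a ^ (m + 1) := by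
  rw [pow_succ a (m + 1), ← mul_assoc, h.2.2, ← pow_succ]

lemma mul_mul_mul_self (h : IsCoreEPInverse m a x) : x * a * (a * x) = a * x := by
  calc x * a * (a * x) = x * a ^ (m + 2) * x ^ (m + 1) := by
        rw [h.mul_eq_pow_mul_pow, pow_succ' a (m + 1)]; simp only [mul_assoc]
    _ = a * x := by rw [h.mul_pow_add_two, h.mul_eq_pow_mul_pow]

theorem unique {y : R} (hx : IsCoreEPInverse m a x) (hy : IsCoreEPInverse m a y) : x = y := by
  have hxy : a * x * (a * y) = a * y := by
    rw [hy.mul_eq_pow_mul_pow, ← mul_assoc, hx.mul_mul_pow_succ]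
  have hyx : a * y * (a * x) = a * x := by
    rw [hx.mul_eq_pow_mul_pow, ← mul_assoc, hy.mul_mul_pow_succ]
  have hp : a * x = a * y := by
    rw [← hxy, ← hx.1.star_eq, ← hy.1.star_eq, ← star_mul, hyx]
  calc x = x * (a * y) := by rw [← hp, hx.mul_mul_self]
    _ = x * a ^ (m + 1) * y ^ (m + 1) := by rw [hy.mul_eq_pow_mul_pow, mul_assoc]
    _ = y := by rw [hx.2.2, hy.pow_mul_pow_succ]

end Monoid

section Ring

variable {R : Type*} [Ring R] [StarRing R] {m : ℕ} {a x : R}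

lemma eq_zero_of_star_mul_eq_zero (h : IsCoreEPInverse m a x) {w : R} (hw : a * x * w = w)
    (hxw : star x * w = 0) : w = 0 := by
  calc w = star (x * a * (a * x)) * w := by rw [h.mul_mul_mul_self, h.1.star_eq, hw]
    _ = star (a * x) * star a * (star x * w) := by simp only [star_mul, mul_assoc]
    _ = 0 := by rw [hxw, mul_zero]

lemma exists_eq_pow_mul_iff (h : IsCoreEPInverse m a x) {s : R} :
    (∃ z, s = a ^ m * z) ↔ x * (a * s) = s := by
  constructor
  · rintro ⟨z, rfl⟩
    rw [← mul_assoc a, ← pow_succ', ← mul_assoc, h.2.2]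
  · intro hs
    exact ⟨x ^ (m + 1) * (a * s), by rw [← mul_assoc, h.pow_mul_pow_succ, hs]⟩

lemma add_mul_mul_eq_zero (h : IsCoreEPInverse m a x) {b y : R}
    (h2 : a * (x * y + y * x) + b * (x * x) = y) (hyp : y * (a * x) = -(x * b * x)) :
    (a * y + b * x) * x = 0 := by
  have hpxbx : a * x * (x * b * x) = x * b * x := by
    rw [← mul_assoc, ← mul_assoc, mul_assoc a x x, h.2.1]
  have e : y * (a * x) = y * (a * x) + (a * y + b * x) * x := by
    calc y * (a * x) = (a * (x * y + y * x) + b * (x * x)) * (a * x) := by rw [h2]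
      _ = a * x * (y * (a * x)) + a * (y * (x * (a * x))) + b * (x * (x * (a * x))) := by
        noncomm_ring
      _ = y * (a * x) + (a * y + b * x) * x := by
        rw [hyp, h.mul_mul_self, mul_neg, hpxbx]
        noncomm_ring
  exact left_eq_add.mp e

theorem eq_neg_of_mul_pow_succ_eq_zero (h : IsCoreEPInverse m a x) {b y : R}
    (h1 : IsSelfAdjoint (a * y + b * x)) (h2 : a * (x * y + y * x) + b * (x * x) = y)
    (hd : (y + x * b * x) * a ^ (m + 1) = 0) : y = -(x * b * x) := by
  set d := y + x * b * x with hd_def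
  set M := a * y + b * x
  have hpx : a * x * x = x := by rw [mul_assoc, h.2.1]
  have hyp : y * (a * x) = -(x * b * x) := by
    have hdp : d * (a * x) = 0 := by rw [h.mul_eq_pow_mul_pow, ← mul_assoc, hd, zero_mul]
    rw [hd_def, add_mul, mul_assoc (x * b), h.mul_mul_self] at hdp
    exact eq_neg_of_add_eq_zero_left hdp
  have hMx : M * x = 0 := h.add_mul_mul_eq_zero h2 hyp
  have hpy : a * x * y = y := by
    have e : a * (x * y + y * x) + b * (x * x) = a * x * y + M * x := by
      simp only [M]; noncomm_ring
    rwa [e, hMx, add_zero] at h2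
  have hpd : a * x * d = d := by
    rw [mul_add, hpy, ← mul_assoc, ← mul_assoc, hpx]
  have hN : a * d = a * x * M := by
    have hay : a * x * (a * y) = a * y := by
      calc a * x * (a * y) = a * (x * a * (a * x)) * y := by
            conv_lhs => rw [← hpy]
            simp only [mul_assoc]
        _ = a * y := by rw [h.mul_mul_mul_self, mul_assoc a (a * x), hpy]
    simp only [d, M, mul_add, hay, mul_assoc]
  have hN0 : a * d = 0 := by
    refine h.eq_zero_of_star_mul_eq_zero ?_ ?_
    · rw [hN, ← mul_assoc, mul_assoc a x (a * x), h.mul_mul_self]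
    · calc star x * (a * d) = star (a * x * x) * M := by
            rw [hN, star_mul, h.1.star_eq, ← mul_assoc]
        _ = star (M * x) := by rw [hpx, star_mul, h1.star_eq]
        _ = 0 := by rw [hMx, star_zero]
  have hd0 : d = 0 := by
    calc d = x * a * (a * x) * d := by rw [h.mul_mul_mul_self, hpd]
      _ = x * (a * (a * x * d)) := by simp only [mul_assoc]
      _ = 0 := by rw [hpd, hN0, mul_zero]
  exact eq_neg_of_add_eq_zero_left hd0

theorem exists_eq_pow_mul_iff_eq_neg (h : IsCoreEPInverse m a x) {b y s : R}
    (h1 : IsSelfAdjoint (a * y + b * x)) (h2 : a * (x * y + y * x) + b * (x * x) = y)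
    (h3 : x * (a * s + b * a ^ m) + y * a ^ (m + 1) = s) :
    (∃ z, s = a ^ m * z) ↔ y = -(x * b * x) := by
  have hs : x * (a * s) = s ↔ (y + x * b * x) * a ^ (m + 1) = 0 := by
    rw [mul_add, add_assoc] at h3
    conv_lhs => rhs; rw [← h3]
    rw [left_eq_add, add_mul, mul_assoc (x * b), h.2.2, add_comm, mul_assoc]
  rw [h.exists_eq_pow_mul_iff, hs]
  refine ⟨h.eq_neg_of_mul_pow_succ_eq_zero h1 h2, fun hy => ?_⟩
  rw [hy, neg_add_cancel, zero_mul]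

end Ring

end IsCoreEPInverse

namespace Matrix

variable {K : Type*} {l m p : Type*} [Fintype m] [Fintype p]

lemma range_mulVecLin_fromCols [CommSemiring K] (M : Matrix l m K) (S : Matrix l p K) :
    LinearMap.range (fromCols M S).mulVecLin =
      LinearMap.range M.mulVecLin ⊔ LinearMap.range S.mulVecLin := by
  rw [range_mulVecLin, range_mulVecLin, range_mulVecLin, ← Submodule.span_union,
    ← Set.Sum.elim_range]
  congr 2
  ext (j | j) i <;> rfl

lemma exists_eq_mul_iff_range_le [CommSemiring K] [DecidableEq p] (M : Matrix l m K)
    (S : Matrix l p K) :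
    (∃ Z : Matrix m p K, S = M * Z) ↔
      LinearMap.range S.mulVecLin ≤ LinearMap.range M.mulVecLin := by
  refine ⟨?_, fun h => ?_⟩
  · rintro ⟨Z, rfl⟩
    rw [mulVecLin_mul]
    exact LinearMap.range_comp_le_range _ _
  · choose z hz using fun j => h (LinearMap.mem_range_self S.mulVecLin (Pi.single j 1))
    refine ⟨(of z)ᵀ, ?_⟩
    ext i j
    have := congr_fun (hz j) i
    simp only [mulVecLin_apply, mulVec_single_one] at this
    exact this.symm

lemma rank_fromCols_eq_iff [Field K] [Fintype l] (M : Matrix l m K) (S : Matrix l p K) :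
    (fromCols M S).rank = M.rank ↔
      LinearMap.range S.mulVecLin ≤ LinearMap.range M.mulVecLin := by
  rw [rank, rank, range_mulVecLin_fromCols, ← sup_eq_left]
  exact ⟨fun h => (Submodule.eq_of_le_of_finrank_eq le_sup_left h.symm).symm,
    fun h => by rw [h]⟩

end Matrix

lemma isCEP_iff {n m : ℕ} {A X : Mat n} : IsCEP m A X ↔ IsCoreEPInverse m A X := by
  simp only [IsCEP, IsCoreEPInverse, IsSelfAdjoint, star_eq_conjTranspose,
    conjTranspose_eq_transpose_of_trivial]

lemma dpow_fst {n : ℕ} (X : DM n) (k : ℕ) : (dpow X k).1 = X.1 ^ k := by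
  induction k with
  | zero => rfl
  | succ k ih => rw [dpow, dmul, ih, pow_succ']

lemma dpow_succ_snd {n : ℕ} (X : DM n) (k : ℕ) :
    (dpow X (k + 1)).2 = X.1 * (dpow X k).2 + X.2 * X.1 ^ k := by
  rw [dpow, dmul, dpow_fst]

lemma dpow_snd {n : ℕ} (X : DM n) (k : ℕ) :
    (dpow X k).2 = ∑ i ∈ Finset.range k, X.1 ^ (k - 1 - i) * X.2 * X.1 ^ i := by
  induction k with
  | zero => rfl
  | succ k ih =>
    rw [dpow_succ_snd, ih, Finset.sum_range_succ, Finset.mul_sum, Nat.add_sub_cancel,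
      Nat.sub_self, pow_zero, one_mul]
    congr 1
    refine Finset.sum_congr rfl fun i hi => ?_
    have hik : k - i = k - 1 - i + 1 := by have := Finset.mem_range.1 hi; omega
    rw [hik, pow_succ']
    simp only [mul_assoc]

lemma isDualCEP_iff {n m : ℕ} {A B X Y : Mat n} :
    IsDualCEP m (A, B) (X, Y) ↔ IsCoreEPInverse m A X ∧ IsSelfAdjoint (A * Y + B * X) ∧
      A * (X * Y + Y * X) + B * (X * X) = Y ∧
      X * (A * (dpow (A, B) m).2 + B * A ^ m) + Y * A ^ (m + 1) = (dpow (A, B) m).2 := by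
  have hpow : dpow (A, B) (m + 1) = (A ^ (m + 1), A * (dpow (A, B) m).2 + B * A ^ m) := by
    rw [Prod.ext_iff, dpow_fst, dpow_succ_snd]
    exact ⟨rfl, rfl⟩
  rw [IsDualCEP, hpow, ← isCEP_iff]
  simp only [IsCEP, IsSelfAdjoint, star_eq_conjTranspose, conjTranspose_eq_transpose_of_trivial,
    dT, dmul, Prod.ext_iff, dpow_fst]
  tauto

theorem stmt11_general {n m : ℕ} (A B : Mat n)
    (S : Mat n) (hS : S = ∑ i ∈ Finset.range m, A ^ (m - 1 - i) * B * A ^ i)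
    (Ac : Mat n) (hAc : IsCEP m A Ac)
    (Xh : DM n) (hXh : IsDualCEP m (A, B) Xh) :
    (Matrix.of fun i (j : Fin n ⊕ Fin n) =>
        Sum.elim (fun k => (A ^ m) i k) (fun k => S i k) j).rank = (A ^ m).rank ↔
      Xh = (Ac, -(Ac * B * Ac)) := by
  obtain ⟨X, Y⟩ := Xh
  obtain ⟨hX, h1, h2, h3⟩ := isDualCEP_iff.1 hXh
  obtain rfl : X = Ac := hX.unique (isCEP_iff.1 hAc)
  rw [dpow_snd, ← hS] at h3
  change (fromCols (A ^ m) S).rank = _ ↔ _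
  rw [rank_fromCols_eq_iff, ← exists_eq_mul_iff_range_le,
    hX.exists_eq_pow_mul_iff_eq_neg h1 h2 h3, Prod.mk.injEq]
  exact (and_iff_right rfl).symm

theorem stmt11 {n m : ℕ} (A B : Mat n) (hm : MatIndex A m)
    (S : Mat n) (hS : S = ∑ i ∈ Finset.range m, A ^ (m - 1 - i) * B * A ^ i)
    (Ac : Mat n) (hAc : IsCEP m A Ac)
    (Xh : DM n) (hXh : IsDualCEP m (A, B) Xh) :
    (Matrix.of fun i (j : Fin n ⊕ Fin n) =>
        Sum.elim (fun k => (A ^ m) i k) (fun k => S i k) j).rank = (A ^ m).rank ↔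
      Xh = (Ac, -(Ac * B * Ac)) :=
  stmt11_general A B S hS Ac hAc Xh hXh
end

section
/- Let Â = A + εB be a dual real n×n matrix with index of A equal to m, and S = Σ_{i=1}^m A^{m-i} B A^{i-1}. If the dual Moore–Penrose inverse (Â^m)^† exists and (Â^m)^† = (A^m)^† − ε (A^m)^† S (A^m)^†, then the dual core-EP inverse of Â exists and Â^⊕ = A^⊕ − ε A^⊕ B A^⊕. -/
open Matrix

/-- `X` is the Moore-Penrose inverse of `M`. -/
def IsMP {n : ℕ} (M X : Mat n) : Prop :=
  M * X * M = M ∧ X * M * X = X ∧ (M * X)ᵀ = M * X ∧ (X * M)ᵀ = X * M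

/-- `Xh` is a dual Moore-Penrose inverse of the dual matrix `Mh`. -/
def IsDualMP {n : ℕ} (Mh Xh : DM n) : Prop :=
  dmul (dmul Mh Xh) Mh = Mh ∧ dmul (dmul Xh Mh) Xh = Xh ∧
    dT (dmul Mh Xh) = dmul Mh Xh ∧ dT (dmul Xh Mh) = dmul Xh Mh

/-!
Since `A ^ m` and `A ^ (m + 1)` have the same range, `A * Ac` and `A ^ m * P` are symmetric
idempotents with the same range, hence equal. The dual parts of the first and third dual
Moore–Penrose equations force `A ^ m * P * S = S`. Multiplying this by `Ac ^ m` and projecting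
with `E = 1 - A * Ac` gives `∑ j < m, f j = 0` for `f j = E * A ^ j * B * Ac ^ (j + 1)`. As the
range of `A * Ac` is `A`-invariant, `f (j + 1) = (E * A) * f j * Ac`, and `f m = 0`, so
telescoping yields `f 0 = E * B * Ac = 0`. With `A * Ac * B * Ac = B * Ac` and `Ac * A * S = S`
the dual core-EP equations become direct computations.
-/
open Finset

section Ring

variable {R : Type*} [Ring R]

theorem apply_zero_eq_zero_of_sum_range_eq_zero {f : ℕ → R} {N C : R} {m : ℕ}
    (hf : ∀ j, f (j + 1) = N * f j * C) (hsum : ∑ j ∈ range m, f j = 0) (hm : f m = 0) :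
    f 0 = 0 := by
  have h := sum_range_sub f m
  simp only [hf, sum_sub_distrib, ← sum_mul, ← mul_sum, hsum, mul_zero, zero_mul, sub_zero,
    hm, zero_sub] at h
  exact neg_eq_zero.mp h.symm

theorem pow_mul_pow_succ_of_mul_mul_self {M : Type*} [Monoid M] {a c : M} (h : a * (c * c) = c)
    (k : ℕ) : a ^ k * c ^ (k + 1) = c := by
  induction k with
  | zero => simp
  | succ k ih =>
    calc a ^ (k + 1) * c ^ (k + 1 + 1) = a ^ k * (a * (c * c)) * c ^ k := by
          rw [pow_succ a, pow_succ' c, pow_succ' c]; simp only [mul_assoc]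
      _ = c := by rw [h, mul_assoc, ← pow_succ', ih]

theorem sum_pow_mul_pow_mul_pow_eq {A B C : R} (h : A * (C * C) = C) (m : ℕ) :
    (∑ i ∈ range m, A ^ (m - 1 - i) * B * A ^ i) * C ^ m =
      ∑ j ∈ range m, A ^ j * B * C ^ (j + 1) := by
  rw [sum_mul, ← sum_range_reflect]
  refine sum_congr rfl fun j hj => ?_
  have hj := mem_range.mp hj
  obtain ⟨k, rfl⟩ : ∃ k, m = j + k + 1 := ⟨m - 1 - j, by omega⟩
  have hC : A ^ k * C ^ (j + k + 1) = C ^ (j + 1) := by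
    rw [show j + k + 1 = k + 1 + j by omega, pow_add, ← mul_assoc,
      pow_mul_pow_succ_of_mul_mul_self h, pow_succ']
  rw [show j + k + 1 - 1 - (j + k + 1 - 1 - j) = j by omega,
    show j + k + 1 - 1 - j = k by omega, mul_assoc, hC]

theorem mul_mul_eq_of_mul_sum_eq {A B C Q : R} {m : ℕ} (hQA : Q * A ^ m = A ^ m)
    (hAQ : Q * A * Q = A * Q)
    (hsum : Q * ∑ j ∈ range m, A ^ j * B * C ^ (j + 1) =
      ∑ j ∈ range m, A ^ j * B * C ^ (j + 1)) :
    Q * B * C = B * C := by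
  have hcompl : (1 - Q) * A * (1 - Q) = (1 - Q) * A := by
    rw [mul_sub, mul_one, sub_mul (1 : R), one_mul, sub_mul, hAQ, sub_self, sub_zero]
  have key := apply_zero_eq_zero_of_sum_range_eq_zero (m := m)
    (f := fun j => (1 - Q) * (A ^ j * B * C ^ (j + 1))) (N := (1 - Q) * A) (C := C) ?_ ?_ ?_
  · simp only [pow_zero, one_mul, zero_add, pow_one] at key
    rw [sub_mul, one_mul, sub_eq_zero, ← mul_assoc] at key
    exact key.symm
  · intro j
    rw [← mul_assoc _ (1 - Q), hcompl, pow_succ' A j, pow_succ C (j + 1)]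
    simp only [mul_assoc]
  · rw [← mul_sum, sub_mul, one_mul, hsum, sub_self]
  · rw [← mul_assoc, ← mul_assoc, sub_mul, one_mul, hQA, sub_self, zero_mul, zero_mul]

end Ring

namespace Matrix

theorem mul_eq_of_rank_mul_eq {l m K : Type*} [Fintype l] [Fintype m] [Field K]
    {M : Matrix m m K} {N : Matrix m l K} {Q : Matrix m m K}
    (hr : (M * N).rank = M.rank) (h : Q * (M * N) = M * N) : Q * M = M := by
  have hrange : LinearMap.range (M * N).mulVecLin = LinearMap.range M.mulVecLin := by
    refine Submodule.eq_of_le_of_finrank_le ?_ hr.ge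
    rw [mulVecLin_mul]
    exact LinearMap.range_comp_le_range _ _
  refine ext_iff_mulVec.mpr fun v => ?_
  obtain ⟨w, hw⟩ : M *ᵥ v ∈ LinearMap.range (M * N).mulVecLin := by
    rw [hrange]; exact ⟨v, rfl⟩
  rw [mulVecLin_apply] at hw
  rw [← mulVec_mulVec, ← hw, mulVec_mulVec, h]

theorem eq_of_transpose_eq_of_mul_eq {n R : Type*} [Fintype n] [CommSemiring R]
    {P Q : Matrix n n R} (hP : Pᵀ = P) (hQ : Qᵀ = Q) (hPQ : P * Q = Q) (hQP : Q * P = P) :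
    P = Q := by
  calc P = (Q * P)ᵀ := by rw [hQP, hP]
    _ = Q := by rw [transpose_mul, hP, hQ, hPQ]

end Matrix

theorem dpow_mk {n : ℕ} (A B : Mat n) (k : ℕ) :
    dpow (A, B) k = (A ^ k, ∑ i ∈ range k, A ^ (k - 1 - i) * B * A ^ i) := by
  induction k with
  | zero => simp [dpow]
  | succ k ih =>
    rw [dpow, ih, dmul]
    refine Prod.ext (pow_succ' A k).symm ?_
    dsimp only
    rw [sum_range_succ, mul_sum, Nat.add_sub_cancel, Nat.sub_self, pow_zero, one_mul]
    congr 1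
    refine sum_congr rfl fun i hi => ?_
    rw [show k - i = k - 1 - i + 1 by have := mem_range.mp hi; omega, pow_succ']
    simp only [mul_assoc]

namespace IsCEP

variable {n m : ℕ} {A X : Mat n}

theorem pow_mul_pow_succ (h : IsCEP m A X) (k : ℕ) : A ^ k * X ^ (k + 1) = X :=
  pow_mul_pow_succ_of_mul_mul_self h.2.1 k

theorem mul_eq_pow_mul (h : IsCEP m A X) : A * X = A ^ m * (A * X ^ (m + 1)) := by
  conv_lhs => rw [← h.pow_mul_pow_succ m]
  rw [← mul_assoc, ← mul_assoc, ← pow_succ', pow_succ]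

theorem mul_pow_mul (h : IsCEP m A X) (Y : Mat n) : X * A * (A ^ m * Y) = A ^ m * Y := by
  rw [← mul_assoc, mul_assoc X, ← pow_succ', h.2.2]

theorem mul_mul_pow (h : IsCEP m A X) (hm : MatIndex A m) : A * X * A ^ m = A ^ m := by
  refine Matrix.mul_eq_of_rank_mul_eq (N := A) (by rw [← pow_succ]; exact hm.1) ?_
  rw [← pow_succ, mul_assoc, h.2.2, pow_succ']

theorem mul_mul_mul_self (h : IsCEP m A X) (hm : MatIndex A m) :
    A * X * A * (A * X) = A * (A * X) := by
  have hAAX : A * (A * X) = A ^ m * (A * (A * X ^ (m + 1))) := by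
    rw [h.mul_eq_pow_mul, ← mul_assoc, ← pow_succ', pow_succ, mul_assoc]
  rw [mul_assoc _ A, hAAX, ← mul_assoc, h.mul_mul_pow hm]

theorem mul_eq_pow_mul_of_isMP (h : IsCEP m A X) (hm : MatIndex A m) {P : Mat n}
    (hP : IsMP (A ^ m) P) : A * X = A ^ m * P := by
  refine Matrix.eq_of_transpose_eq_of_mul_eq h.1 hP.2.2.1 ?_ ?_
  · rw [← mul_assoc, h.mul_mul_pow hm]
  · rw [h.mul_eq_pow_mul, ← mul_assoc, hP.1]

end IsCEP

theorem IsDualMP.mul_mul_eq_of_isMP {n : ℕ} {M S P : Mat n} (hP : IsMP M P)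
    (h : IsDualMP (M, S) (P, -(P * S * P))) : M * P * S = S := by
  obtain ⟨hMPM, hPMP, hMP, -⟩ := hP
  have h1 := congrArg Prod.snd h.1
  have h3 := congrArg Prod.snd h.2.2.1
  simp only [dmul, dT] at h1 h3
  set W := M * -(P * S * P) + S * P with hW
  have hWJ : W * (M * P) = W := by
    simp only [hW, add_mul, neg_mul, mul_neg, mul_assoc, ← mul_assoc P M P, hPMP]
  have hJW : M * P * W = 0 := by
    simp only [hW, mul_add, mul_neg, ← mul_assoc, hMPM, neg_add_cancel]
  have hW0 : W = 0 :=
    calc W = (W * (M * P))ᵀ := by rw [hWJ, h3]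
      _ = M * P * W := by rw [transpose_mul, hMP, h3]
      _ = 0 := hJW
  rwa [hW0, zero_mul, add_zero] at h1

theorem IsCEP.isDualCEP {n m : ℕ} {A B S X : Mat n} (h : IsCEP m A X)
    (hS : dpow (A, B) m = (A ^ m, S)) (hB : A * X * B * X = B * X) (hXS : X * A * S = S) :
    IsDualCEP m (A, B) (X, -(X * B * X)) := by
  obtain ⟨hsym, hout, hpow⟩ := h
  have hB' : A * (X * B * X) = B * X := by simpa only [mul_assoc] using hB
  refine ⟨?_, ?_, ?_⟩
  · simp only [dmul, dT, mul_neg, hB', neg_add_cancel, transpose_zero, hsym]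
  · have e1 : A * (X * (X * B * X)) = X * B * X := by
      simpa only [mul_assoc] using congrArg (· * (B * X)) hout
    have e2 : A * (X * B * X * X) = B * (X * X) := by
      simpa only [mul_assoc] using congrArg (· * X) hB
    simp only [dmul, Prod.mk.injEq]
    refine ⟨hout, ?_⟩
    simp only [mul_add, mul_neg, neg_mul, e1, e2]
    abel
  · rw [show dpow (A, B) (m + 1) = dmul (A, B) (dpow (A, B) m) from rfl, hS]
    simp only [dmul, Prod.mk.injEq]
    rw [← pow_succ', hpow]
    refine ⟨rfl, ?_⟩
    rw [mul_add, ← mul_assoc X A S, hXS, neg_mul, mul_assoc (X * B), hpow]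
    simp only [mul_assoc]
    abel

theorem stmt12 {n m : ℕ} (A B : Mat n) (hm : MatIndex A m)
    (S : Mat n) (hS : S = ∑ i ∈ Finset.range m, A ^ (m - 1 - i) * B * A ^ i)
    (Ac : Mat n) (hAc : IsCEP m A Ac)
    (P : Mat n) (hP : IsMP (A ^ m) P)
    (hdP : IsDualMP (dpow (A, B) m) (P, -(P * S * P))) :
    IsDualCEP m (A, B) (Ac, -(Ac * B * Ac)) := by
  have hdpow : dpow (A, B) m = (A ^ m, S) := by rw [dpow_mk, hS]
  rw [hdpow] at hdP
  have hQ : A * Ac = A ^ m * P := hAc.mul_eq_pow_mul_of_isMP hm hP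
  have hQS : A ^ m * P * S = S := hdP.mul_mul_eq_of_isMP hP
  have hXS : Ac * A * S = S := by
    rw [← hQS, mul_assoc (A ^ m), hAc.mul_pow_mul, ← mul_assoc, hQS]
  have hB : A * Ac * B * Ac = B * Ac := by
    refine mul_mul_eq_of_mul_sum_eq (hAc.mul_mul_pow hm) (hAc.mul_mul_mul_self hm) ?_
    rw [← sum_pow_mul_pow_mul_pow_eq hAc.2.1, ← hS, ← mul_assoc, hQ, hQS]
  exact hAc.isDualCEP hdpow hB hXS
end
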